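/- arXiv:2405.13262 — 4 statements merged into one kernel-verified Lean document; each statement's English description precedes it below -/
import Mathlib

section
/- Let G > 0, m₁ > 0, m₂ > 0, let μ and λ be nonzero real numbers, let v ∈ ℝ³ with μ² − λ²‖v‖² ≠ 0, and let S₁ ∈ ℝ³ be a nonzero vector. If the function Ψ₁₂(w) = w^{2/3} S₁ satisfies (μ² − λ²‖v‖²) · Ψ₁₂''(w) = −G(m₁+m₂) Ψ₁₂(w)/‖Ψ₁₂(w)‖³ for all w in some nonempty open interval of positive reals, then necessarily μ² − λ²‖v‖² > 0 and ‖S₁‖³ = 9G(m₁+m₂) / (2(μ² − λ²‖v‖²)). -/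
/-!
For `w > 0` the ansatz `Ψ(w) = w^(2/3) • S₁` has `Ψ'' = -(2/9) w^(-4/3) • S₁`, while
`‖Ψ(w)‖³ = w² ‖S₁‖³` turns the right-hand side into `-(G(m₁+m₂)/‖S₁‖³) w^(-4/3) • S₁`.
Comparing coefficients at a single point of the interval gives
`(2/9)(μ² − λ²‖v‖²) = G(m₁+m₂)/‖S₁‖³`, whose right-hand side is positive.
-/

theorem iteratedDeriv_rpow_smul_const {E : Type*} [NormedAddCommGroup E] [NormedSpace ℝ E]
    (n : ℕ) (p : ℝ) (S : E) {w : ℝ} (hw : w ≠ 0) :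
    iteratedDeriv n (fun w : ℝ => w ^ p • S) w =
      ((descPochhammer ℝ n).eval p * w ^ (p - n)) • S := by
  rw [iteratedDeriv_smul_const (Real.contDiffAt_rpow_const_of_ne hw), iteratedDeriv_eq_iterate,
    Real.iter_deriv_rpow_const]

theorem norm_rpow_two_thirds_smul_pow_three {E : Type*} [SeminormedAddCommGroup E]
    [NormedSpace ℝ E] (S : E) {w : ℝ} (hw : 0 ≤ w) :
    ‖w ^ ((2 : ℝ) / 3) • S‖ ^ 3 = w ^ 2 * ‖S‖ ^ 3 := by
  rw [norm_smul, Real.norm_of_nonneg (by positivity), mul_pow, ← Real.rpow_mul_natCast hw]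
  norm_num

theorem stmt_1_general (G m₁ m₂ μ lam : ℝ) (hG : 0 < G) (hm₁ : 0 < m₁) (hm₂ : 0 < m₂)
    (v : EuclideanSpace ℝ (Fin 3))
    (S₁ : EuclideanSpace ℝ (Fin 3)) (hS₁ : S₁ ≠ 0)
    (Ψ : ℝ → EuclideanSpace ℝ (Fin 3))
    (hΨ : ∀ w : ℝ, Ψ w = w ^ ((2 : ℝ) / 3) • S₁)
    (a b : ℝ) (hab : a < b) (ha : 0 ≤ a)
    (heq : ∀ w ∈ Set.Ioo a b,
      (μ ^ 2 - lam ^ 2 * ‖v‖ ^ 2) • iteratedDeriv 2 Ψ w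
        = (-(G * (m₁ + m₂)) / ‖Ψ w‖ ^ 3) • Ψ w) :
    0 < μ ^ 2 - lam ^ 2 * ‖v‖ ^ 2 ∧
      ‖S₁‖ ^ 3 = 9 * G * (m₁ + m₂) / (2 * (μ ^ 2 - lam ^ 2 * ‖v‖ ^ 2)) := by
  set c := μ ^ 2 - lam ^ 2 * ‖v‖ ^ 2
  obtain ⟨w, hw⟩ := Set.nonempty_Ioo.mpr hab
  have hw₀ : 0 < w := ha.trans_lt hw.1
  have hwave := heq w hw
  rw [funext hΨ, iteratedDeriv_rpow_smul_const 2 _ _ hw₀.ne', Real.rpow_sub_natCast hw₀.ne',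
    norm_rpow_two_thirds_smul_pow_three _ hw₀.le, smul_smul, smul_smul] at hwave
  have hscal := smul_left_injective ℝ hS₁ hwave
  have key : c * (2 * ‖S₁‖ ^ 3) = 9 * (G * (m₁ + m₂)) := by
    rw [descPochhammer_succ_eval, descPochhammer_one, Polynomial.eval_X, Nat.cast_one] at hscal
    field_simp at hscal
    linarith
  have hc : 0 < c :=
    pos_of_mul_pos_left (key.symm ▸ by positivity : 0 < c * (2 * ‖S₁‖ ^ 3)) (by positivity)
  exact ⟨hc, by field_simp; linarith⟩

/-- If the traveling wave `Ψ₁₂(w) = w^(2/3) • S₁` (with `S₁ ≠ 0`) solves the 2-body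
relative difference companion wave equation on some nonempty open interval of positive reals,
then necessarily `μ² − λ²‖v‖² > 0` and `‖S₁‖³ = 9G(m₁+m₂)/(2(μ² − λ²‖v‖²))`. -/
theorem stmt_1 (G m₁ m₂ μ lam : ℝ) (hG : 0 < G) (hm₁ : 0 < m₁) (hm₂ : 0 < m₂)
    (hμ : μ ≠ 0) (hlam : lam ≠ 0) (v : EuclideanSpace ℝ (Fin 3))
    (hne : μ ^ 2 - lam ^ 2 * ‖v‖ ^ 2 ≠ 0)
    (S₁ : EuclideanSpace ℝ (Fin 3)) (hS₁ : S₁ ≠ 0)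
    (Ψ : ℝ → EuclideanSpace ℝ (Fin 3))
    (hΨ : ∀ w : ℝ, Ψ w = w ^ ((2 : ℝ) / 3) • S₁)
    (a b : ℝ) (hab : a < b) (ha : 0 ≤ a)
    (heq : ∀ w ∈ Set.Ioo a b,
      (μ ^ 2 - lam ^ 2 * ‖v‖ ^ 2) • iteratedDeriv 2 Ψ w
        = (-(G * (m₁ + m₂)) / ‖Ψ w‖ ^ 3) • Ψ w) :
    0 < μ ^ 2 - lam ^ 2 * ‖v‖ ^ 2 ∧
      ‖S₁‖ ^ 3 = 9 * G * (m₁ + m₂) / (2 * (μ ^ 2 - lam ^ 2 * ‖v‖ ^ 2)) :=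
  stmt_1_general G m₁ m₂ μ lam hG hm₁ hm₂ v S₁ hS₁ Ψ hΨ a b hab ha heq
end

section
/- Let G > 0, m₁ > 0, m₂ > 0, let μ, λ₁, λ₂ be nonzero real numbers, and let v ∈ ℝ³ satisfy μ² − λ₁²‖v‖² ≠ 0 and μ² − λ₂²‖v‖² ≠ 0. Define θ₁ = Gm₂/(μ² − λ₁²‖v‖²) and θ₂ = Gm₁/(μ² − λ₂²‖v‖²), and assume θ₁ + θ₂ > 0. Let S₂ ∈ ℝ³ be a nonzero vector such that, with S₁ := −(θ₁/θ₂)S₂, one has ‖S₁ − S₂‖³ = 9(θ₁+θ₂)/2. Then the functions Ψ₁(w) = −(θ₁/θ₂) w^{2/3} S₂ and Ψ₂(w) = w^{2/3} S₂ satisfy, for every w > 0, the 2-body companion wave system (μ² − λ₁²‖v‖²) Ψ₁''(w) = Gm₂(Ψ₂(w) − Ψ₁(w))/‖Ψ₂(w) − Ψ₁(w)‖³ and (μ² − λ₂²‖v‖²) Ψ₂''(w) = Gm₁(Ψ₁(w) − Ψ₂(w))/‖Ψ₂(w) − Ψ₁(w)‖³. -/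
/-!
The relative position `D w = Ψ₂ w - Ψ₁ w = w^(2/3) • (S₂ - S₁)` is the homothetic solution of
the Kepler problem `D'' = -(θ₁ + θ₂) D / ‖D‖³`: since `(w^(2/3))'' = -(2/9) w^(-4/3)`, this is
exactly the normalisation `‖S₂ - S₁‖³ = 9(θ₁ + θ₂)/2`. The relation `θ₂ S₁ + θ₁ S₂ = 0` puts the
weighted barycentre at the origin, so `Ψ₁ = -θ₁/(θ₁+θ₂) • D` and `Ψ₂ = θ₂/(θ₁+θ₂) • D`, whence
`Ψ₁'' = θ₁ D/‖D‖³` and `Ψ₂'' = -θ₂ D/‖D‖³`. Multiplying by `μ² - λᵢ²‖v‖²` turns `θ₁`, `θ₂` back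
into `G m₂`, `G m₁`.
-/

section

variable {E : Type*} [NormedAddCommGroup E] [NormedSpace ℝ E]

theorem iteratedDeriv_two_rpow_smul (p : ℝ) (T : E) {w : ℝ} (hw : w ≠ 0) :
    iteratedDeriv 2 (fun x => x ^ p • T) w = (p * (p - 1) * w ^ (p - 2)) • T := by
  rw [iteratedDeriv_smul_const (Real.contDiffAt_rpow_const (Or.inl hw)), iteratedDeriv_eq_iterate,
    Real.iter_deriv_rpow_const]
  simp [descPochhammer_succ_right]

theorem iteratedDeriv_two_rpow_two_thirds_smul {θ : ℝ} {T : E} (hT : ‖T‖ ^ 3 = 9 * θ / 2)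
    {w : ℝ} (hw : 0 < w) :
    iteratedDeriv 2 (fun x => x ^ (2 / 3 : ℝ) • T) w
      = -(θ / ‖w ^ (2 / 3 : ℝ) • T‖ ^ 3) • w ^ (2 / 3 : ℝ) • T := by
  have hnorm : ‖w ^ (2 / 3 : ℝ) • T‖ ^ 3 = w ^ 2 * (9 * θ / 2) := by
    rw [norm_smul, Real.norm_of_nonneg (by positivity), mul_pow, hT, ← Real.rpow_natCast,
      ← Real.rpow_mul hw.le]
    norm_num
  have hpow : w ^ (2 / 3 : ℝ) = w ^ 2 * w ^ (2 / 3 - 2 : ℝ) := by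
    rw [← Real.rpow_natCast, ← Real.rpow_add hw]
    norm_num
  rw [iteratedDeriv_two_rpow_smul _ _ hw.ne', hnorm, smul_smul]
  rcases eq_or_ne θ 0 with rfl | hθ
  · obtain rfl : T = 0 := by simpa using hT
    simp
  · congr 1
    rw [hpow]
    field_simp
    ring

theorem iteratedDeriv_two_div_smul_of_iteratedDeriv_two_eq {D : ℝ → E} {θ w : ℝ} (hθ : θ ≠ 0)
    (hD : iteratedDeriv 2 D w = -(θ / ‖D w‖ ^ 3) • D w) (c : ℝ) :
    iteratedDeriv 2 (fun x => (c / θ) • D x) w = -(c / ‖D w‖ ^ 3) • D w := by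
  rw [iteratedDeriv_fun_const_smul_field, hD, smul_smul]
  congr 1
  field_simp

end

theorem eq_smul_sub_of_smul_add_smul_eq_zero {K V : Type*} [Field K] [AddCommGroup V]
    [Module K V] {a b : K} {x y : V} (hab : a + b ≠ 0) (h : b • x + a • y = 0) :
    x = (-a / (a + b)) • (y - x) ∧ y = (b / (a + b)) • (y - x) := by
  constructor <;> linear_combination (norm := match_scalars) (a + b)⁻¹ • h <;> field_simp <;> ring

theorem stmt_3_general (G m₁ m₂ μ lam₁ lam₂ : ℝ) (hG : 0 < G) (hm₁ : 0 < m₁)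
    (v : EuclideanSpace ℝ (Fin 3))
    (hne₁ : μ ^ 2 - lam₁ ^ 2 * ‖v‖ ^ 2 ≠ 0) (hne₂ : μ ^ 2 - lam₂ ^ 2 * ‖v‖ ^ 2 ≠ 0)
    (θ₁ θ₂ : ℝ)
    (hθ₁ : θ₁ = G * m₂ / (μ ^ 2 - lam₁ ^ 2 * ‖v‖ ^ 2))
    (hθ₂ : θ₂ = G * m₁ / (μ ^ 2 - lam₂ ^ 2 * ‖v‖ ^ 2))
    (hθ : 0 < θ₁ + θ₂)
    (S₂ : EuclideanSpace ℝ (Fin 3))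
    (S₁ : EuclideanSpace ℝ (Fin 3)) (hS₁ : S₁ = -(θ₁ / θ₂) • S₂)
    (hnorm : ‖S₁ - S₂‖ ^ 3 = 9 * (θ₁ + θ₂) / 2)
    (Ψ₁ Ψ₂ : ℝ → EuclideanSpace ℝ (Fin 3))
    (hΨ₁ : ∀ w : ℝ, Ψ₁ w = (-(θ₁ / θ₂) * w ^ ((2 : ℝ) / 3)) • S₂)
    (hΨ₂ : ∀ w : ℝ, Ψ₂ w = w ^ ((2 : ℝ) / 3) • S₂) :
    ∀ w : ℝ, 0 < w →
      (μ ^ 2 - lam₁ ^ 2 * ‖v‖ ^ 2) • iteratedDeriv 2 Ψ₁ w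
          = (G * m₂ / ‖Ψ₂ w - Ψ₁ w‖ ^ 3) • (Ψ₂ w - Ψ₁ w) ∧
      (μ ^ 2 - lam₂ ^ 2 * ‖v‖ ^ 2) • iteratedDeriv 2 Ψ₂ w
          = (G * m₁ / ‖Ψ₂ w - Ψ₁ w‖ ^ 3) • (Ψ₁ w - Ψ₂ w) := by
  intro w hw
  have hθ₂0 : θ₂ ≠ 0 := by rw [hθ₂]; exact div_ne_zero (by positivity) hne₂
  have hGm₁ : G * m₁ = θ₂ * (μ ^ 2 - lam₂ ^ 2 * ‖v‖ ^ 2) := by rw [hθ₂, div_mul_cancel₀ _ hne₂]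
  have hGm₂ : G * m₂ = θ₁ * (μ ^ 2 - lam₁ ^ 2 * ‖v‖ ^ 2) := by rw [hθ₁, div_mul_cancel₀ _ hne₁]
  obtain ⟨hS₁T, hS₂T⟩ := eq_smul_sub_of_smul_add_smul_eq_zero (x := S₁) (y := S₂) hθ.ne'
    (by rw [hS₁, smul_smul, mul_neg, mul_div_cancel₀ _ hθ₂0, neg_smul, neg_add_cancel])
  set D : ℝ → EuclideanSpace ℝ (Fin 3) := fun x => x ^ (2 / 3 : ℝ) • (S₂ - S₁)
  have hD : iteratedDeriv 2 D w = -((θ₁ + θ₂) / ‖D w‖ ^ 3) • D w :=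
    iteratedDeriv_two_rpow_two_thirds_smul (by rwa [norm_sub_rev]) hw
  have hΨ₁D : Ψ₁ = fun x => (-θ₁ / (θ₁ + θ₂)) • D x := by
    funext x; rw [hΨ₁, mul_comm, mul_smul, ← hS₁, smul_comm, ← hS₁T]
  have hΨ₂D : Ψ₂ = fun x => (θ₂ / (θ₁ + θ₂)) • D x := by
    funext x; rw [hΨ₂, smul_comm, ← hS₂T]
  have hΨD : Ψ₂ w - Ψ₁ w = D w := by
    rw [hΨ₁, hΨ₂, mul_comm, mul_smul, ← hS₁, ← smul_sub]
  clear_value D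
  rw [← neg_sub (Ψ₂ w), hΨD, hΨ₁D, hΨ₂D,
    iteratedDeriv_two_div_smul_of_iteratedDeriv_two_eq hθ.ne' hD,
    iteratedDeriv_two_div_smul_of_iteratedDeriv_two_eq hθ.ne' hD,
    smul_smul, smul_smul, smul_neg, ← neg_smul, hGm₁, hGm₂]
  constructor <;> congr 1 <;> ring

/-- With `θ₁ = Gm₂/(μ² − λ₁²‖v‖²)`, `θ₂ = Gm₁/(μ² − λ₂²‖v‖²)`, `θ₁ + θ₂ > 0`,
and a nonzero `S₂` with `S₁ := −(θ₁/θ₂)S₂` satisfying `‖S₁ − S₂‖³ = 9(θ₁+θ₂)/2`, the functions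
`Ψ₁(w) = −(θ₁/θ₂) w^(2/3) S₂` and `Ψ₂(w) = w^(2/3) S₂` solve the 2-body companion wave system
for every `w > 0`. -/
theorem stmt_3 (G m₁ m₂ μ lam₁ lam₂ : ℝ) (hG : 0 < G) (hm₁ : 0 < m₁) (hm₂ : 0 < m₂)
    (hμ : μ ≠ 0) (hlam₁ : lam₁ ≠ 0) (hlam₂ : lam₂ ≠ 0)
    (v : EuclideanSpace ℝ (Fin 3))
    (hne₁ : μ ^ 2 - lam₁ ^ 2 * ‖v‖ ^ 2 ≠ 0) (hne₂ : μ ^ 2 - lam₂ ^ 2 * ‖v‖ ^ 2 ≠ 0)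
    (θ₁ θ₂ : ℝ)
    (hθ₁ : θ₁ = G * m₂ / (μ ^ 2 - lam₁ ^ 2 * ‖v‖ ^ 2))
    (hθ₂ : θ₂ = G * m₁ / (μ ^ 2 - lam₂ ^ 2 * ‖v‖ ^ 2))
    (hθ : 0 < θ₁ + θ₂)
    (S₂ : EuclideanSpace ℝ (Fin 3)) (hS₂ : S₂ ≠ 0)
    (S₁ : EuclideanSpace ℝ (Fin 3)) (hS₁ : S₁ = -(θ₁ / θ₂) • S₂)
    (hnorm : ‖S₁ - S₂‖ ^ 3 = 9 * (θ₁ + θ₂) / 2)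
    (Ψ₁ Ψ₂ : ℝ → EuclideanSpace ℝ (Fin 3))
    (hΨ₁ : ∀ w : ℝ, Ψ₁ w = (-(θ₁ / θ₂) * w ^ ((2 : ℝ) / 3)) • S₂)
    (hΨ₂ : ∀ w : ℝ, Ψ₂ w = w ^ ((2 : ℝ) / 3) • S₂) :
    ∀ w : ℝ, 0 < w →
      (μ ^ 2 - lam₁ ^ 2 * ‖v‖ ^ 2) • iteratedDeriv 2 Ψ₁ w
          = (G * m₂ / ‖Ψ₂ w - Ψ₁ w‖ ^ 3) • (Ψ₂ w - Ψ₁ w) ∧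
      (μ ^ 2 - lam₂ ^ 2 * ‖v‖ ^ 2) • iteratedDeriv 2 Ψ₂ w
          = (G * m₁ / ‖Ψ₂ w - Ψ₁ w‖ ^ 3) • (Ψ₁ w - Ψ₂ w) :=
  stmt_3_general G m₁ m₂ μ lam₁ lam₂ hG hm₁ v hne₁ hne₂ θ₁ θ₂ hθ₁ hθ₂ hθ S₂ S₁ hS₁ hnorm Ψ₁ Ψ₂ hΨ₁
    hΨ₂
end

section
/- Let θ₁, θ₂ be nonzero real numbers and let S₁, S₂ ∈ ℝ³ with S₁ ≠ S₂ satisfy −(2/9)S₁ = θ₁(S₂ − S₁)/‖S₂ − S₁‖³ and −(2/9)S₂ = θ₂(S₁ − S₂)/‖S₂ − S₁‖³. Then θ₁ + θ₂ ≠ 0 and ‖S₁ − S₂‖³ = 9|θ₁ + θ₂|/2. -/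
open scoped RealInnerProductSpace

/- Subtracting the two equations gives `(2/9) (S₁ - S₂) = ((θ₁ + θ₂) / r³) (S₁ - S₂)` with
`r = ‖S₂ - S₁‖ > 0`, so `θ₁ + θ₂ = (2/9) r³`, which is positive. -/

theorem eq_neg_add_of_smul_eq_smul_sub {K M : Type*} [DivisionRing K] [AddCommGroup M]
    [Module K M] {a b c : K} {x y : M} (hxy : x ≠ y)
    (hx : a • x = b • (y - x)) (hy : a • y = c • (x - y)) : a = -(b + c) := by
  apply smul_left_injective K (sub_ne_zero.mpr hxy)
  calc a • (x - y) = b • (y - x) - c • (x - y) := by rw [smul_sub, hx, hy]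
    _ = -(b + c) • (x - y) := by rw [← neg_sub x y, smul_neg, neg_smul, add_smul]; abel

theorem stmt_5_general (θ₁ θ₂ : ℝ)
    (S₁ S₂ : EuclideanSpace ℝ (Fin 3)) (hS : S₁ ≠ S₂)
    (heq₁ : (-(2 / 9) : ℝ) • S₁ = (θ₁ / ‖S₂ - S₁‖ ^ 3) • (S₂ - S₁))
    (heq₂ : (-(2 / 9) : ℝ) • S₂ = (θ₂ / ‖S₂ - S₁‖ ^ 3) • (S₁ - S₂)) :
    θ₁ + θ₂ ≠ 0 ∧ ‖S₁ - S₂‖ ^ 3 = 9 * |θ₁ + θ₂| / 2 := by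
  have hr : 0 < ‖S₂ - S₁‖ ^ 3 := pow_pos (norm_sub_pos_iff.mpr hS.symm) 3
  have hcoeff := eq_neg_add_of_smul_eq_smul_sub hS heq₁ heq₂
  have hsum : θ₁ + θ₂ = 2 / 9 * ‖S₂ - S₁‖ ^ 3 := by
    rw [← add_div, neg_inj, eq_div_iff hr.ne'] at hcoeff
    linarith
  have hpos : 0 < θ₁ + θ₂ := by rw [hsum]; positivity
  refine ⟨hpos.ne', ?_⟩
  rw [abs_of_pos hpos, hsum, norm_sub_rev]
  ring

/-- If nonzero `θ₁, θ₂` and `S₁ ≠ S₂` satisfy the algebraic system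
`−(2/9)S₁ = θ₁(S₂ − S₁)/‖S₂ − S₁‖³` and `−(2/9)S₂ = θ₂(S₁ − S₂)/‖S₂ − S₁‖³`, then
`θ₁ + θ₂ ≠ 0` and `‖S₁ − S₂‖³ = 9|θ₁ + θ₂|/2`. -/
theorem stmt_5 (θ₁ θ₂ : ℝ) (hθ₁ : θ₁ ≠ 0) (hθ₂ : θ₂ ≠ 0)
    (S₁ S₂ : EuclideanSpace ℝ (Fin 3)) (hS : S₁ ≠ S₂)
    (heq₁ : (-(2 / 9) : ℝ) • S₁ = (θ₁ / ‖S₂ - S₁‖ ^ 3) • (S₂ - S₁))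
    (heq₂ : (-(2 / 9) : ℝ) • S₂ = (θ₂ / ‖S₂ - S₁‖ ^ 3) • (S₁ - S₂)) :
    θ₁ + θ₂ ≠ 0 ∧ ‖S₁ - S₂‖ ^ 3 = 9 * |θ₁ + θ₂| / 2 :=
  stmt_5_general θ₁ θ₂ S₁ S₂ hS heq₁ heq₂
end

section
/- Let θ₁, θ₂ be nonzero real numbers and let S₁, S₂ ∈ ℝ³ with S₁ ≠ S₂ satisfy −(2/9)S₁ = θ₁(S₂ − S₁)/‖S₂ − S₁‖³ and −(2/9)S₂ = θ₂(S₁ − S₂)/‖S₂ − S₁‖³. Then θ₁ + θ₂ > 0; that is, no such solution with S₁ ≠ S₂ exists when θ₁ + θ₂ < 0. -/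
open scoped RealInnerProductSpace

/-! Subtracting the two equations leaves `(-(2/9) + (θ₁ + θ₂)/‖S₂ - S₁‖³) • (S₂ - S₁) = 0`;
since `S₂ - S₁ ≠ 0` the scalar vanishes, so `θ₁ + θ₂ = (2/9) ‖S₂ - S₁‖³ > 0`. -/

theorem add_add_smul_sub_eq_zero {R E : Type*} [CommRing R] [AddCommGroup E] [Module R E]
    {c t₁ t₂ : R} {a b : E} (h₁ : c • a = t₁ • (b - a)) (h₂ : c • b = t₂ • (a - b)) :
    (c + t₁ + t₂) • (b - a) = 0 := by
  rw [add_smul, add_smul, smul_sub, h₁, h₂]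
  module

theorem stmt_7_general (θ₁ θ₂ : ℝ)
    (S₁ S₂ : EuclideanSpace ℝ (Fin 3)) (hS : S₁ ≠ S₂)
    (heq₁ : (-(2 / 9) : ℝ) • S₁ = (θ₁ / ‖S₂ - S₁‖ ^ 3) • (S₂ - S₁))
    (heq₂ : (-(2 / 9) : ℝ) • S₂ = (θ₂ / ‖S₂ - S₁‖ ^ 3) • (S₁ - S₂)) :
    0 < θ₁ + θ₂ := by
  have hd : S₂ - S₁ ≠ 0 := sub_ne_zero.mpr hS.symm
  have hr : 0 < ‖S₂ - S₁‖ ^ 3 := pow_pos (norm_pos_iff.mpr hd) 3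
  have hc : -(2 / 9) + θ₁ / ‖S₂ - S₁‖ ^ 3 + θ₂ / ‖S₂ - S₁‖ ^ 3 = 0 :=
    (smul_eq_zero.mp (add_add_smul_sub_eq_zero heq₁ heq₂)).resolve_right hd
  have hsum : θ₁ + θ₂ = 2 / 9 * ‖S₂ - S₁‖ ^ 3 := by
    field_simp at hc
    linarith
  rw [hsum]
  positivity

/-- If nonzero `θ₁, θ₂` and `S₁ ≠ S₂` satisfy the algebraic system
`−(2/9)S₁ = θ₁(S₂ − S₁)/‖S₂ − S₁‖³` and `−(2/9)S₂ = θ₂(S₁ − S₂)/‖S₂ − S₁‖³`, then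
`θ₁ + θ₂ > 0`; in particular no such solution with `S₁ ≠ S₂` exists when `θ₁ + θ₂ < 0`. -/
theorem stmt_7 (θ₁ θ₂ : ℝ) (hθ₁ : θ₁ ≠ 0) (hθ₂ : θ₂ ≠ 0)
    (S₁ S₂ : EuclideanSpace ℝ (Fin 3)) (hS : S₁ ≠ S₂)
    (heq₁ : (-(2 / 9) : ℝ) • S₁ = (θ₁ / ‖S₂ - S₁‖ ^ 3) • (S₂ - S₁))
    (heq₂ : (-(2 / 9) : ℝ) • S₂ = (θ₂ / ‖S₂ - S₁‖ ^ 3) • (S₁ - S₂)) :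
    0 < θ₁ + θ₂ :=
  stmt_7_general θ₁ θ₂ S₁ S₂ hS heq₁ heq₂
end
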